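/- arXiv:1207.2450 — 3 statements merged into one kernel-verified Lean document; each statement's English description precedes it below -/
import Mathlib

section
/- Let X be a discrete-time wide-sense semi-selfsimilar process with index H, scale l = α^T (T ∈ ℕ, α > 1) and parameter space {α^k : k ∈ ℤ}. Then the process Y(n) = α^{-nH} X(α^n), n ∈ ℤ, is wide-sense periodically correlated with period T, i.e., E[Y(n+T) Y(m+T)] = E[Y(n) Y(m)] for all n, m ∈ ℤ. -/
open MeasureTheory

/-- If `X` is discrete-time wide-sense semi-selfsimilar with index `H`, scale
`l = α^T` and parameter space `{α^k : k ∈ ℤ}`, then `Y(n) = α^{-nH} X(α^n)` is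
wide-sense periodically correlated with period `T`. -/
theorem inverse_quasi_Lamperti_periodically_correlated
    {Ω : Type*} [MeasurableSpace Ω] (μ : Measure Ω) [IsProbabilityMeasure μ]
    (X : ℝ → Ω → ℝ) (H α : ℝ) (T : ℕ) (hT : 0 < T) (hH : 0 < H) (hα : 1 < α)
    (hmom : ∀ k : ℤ, Integrable (fun ω => (X (α ^ k) ω) ^ 2) μ)
    (hmean : ∀ k : ℤ,
      ∫ ω, X (α ^ (T : ℤ) * α ^ k) ω ∂μ = (α ^ (T : ℤ)) ^ H * ∫ ω, X (α ^ k) ω ∂μ)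
    (hcov : ∀ k k₁ : ℤ,
      ∫ ω, X (α ^ (T : ℤ) * α ^ k) ω * X (α ^ (T : ℤ) * α ^ k₁) ω ∂μ
        = (α ^ (T : ℤ)) ^ (2 * H) * ∫ ω, X (α ^ k) ω * X (α ^ k₁) ω ∂μ)
    (Y : ℤ → Ω → ℝ)
    (hY : ∀ (n : ℤ) (ω : Ω), Y n ω = α ^ (-(n : ℝ) * H) * X (α ^ n) ω) :
    ∀ n m : ℤ,
      ∫ ω, Y (n + (T : ℤ)) ω * Y (m + (T : ℤ)) ω ∂μ
        = ∫ ω, Y n ω * Y m ω ∂μ := by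
  intro n m
  have hα0 : (0:ℝ) < α := lt_trans one_pos hα
  have e : ∀ j : ℤ, α ^ (j + (T:ℤ)) = α ^ (T:ℤ) * α ^ j := by
    intro j
    rw [zpow_add₀ (ne_of_gt hα0)]
    ring
  have h1 : ∀ ω, Y (n + (T:ℤ)) ω * Y (m + (T:ℤ)) ω
      = (α ^ (-((n:ℝ) + T) * H) * α ^ (-((m:ℝ) + T) * H)) *
        (X (α ^ (T:ℤ) * α ^ n) ω * X (α ^ (T:ℤ) * α ^ m) ω) := by
    intro ω
    rw [hY, hY, e n, e m]
    push_cast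
    ring
  have h2 : ∀ ω, Y n ω * Y m ω
      = (α ^ (-(n:ℝ) * H) * α ^ (-(m:ℝ) * H)) * (X (α ^ n) ω * X (α ^ m) ω) := by
    intro ω
    rw [hY, hY]
    ring
  simp_rw [h1, h2, integral_const_mul]
  rw [hcov n m]
  have hz : (α : ℝ) ^ (T:ℤ) = α ^ ((T:ℝ)) := by
    rw [← Real.rpow_intCast α (T:ℤ)]
    norm_num
  rw [hz, ← Real.rpow_mul hα0.le, ← mul_assoc,
    ← Real.rpow_add hα0, ← mul_assoc, ← Real.rpow_add hα0, ← Real.rpow_add hα0]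
  ring_nf
end

section
/- Simple fractional Brownian motion X(t) = Σ_{n≥1} λ^{(n-1)(H-H')} 1_{[λ^{n-1}, λ^n)}(t) B_{H'}(t) is wide-sense semi-selfsimilar with scale λ and index H: for all s, t ≥ 1, E[X(λ s) X(λ t)] = λ^{2H} E[X(s) X(t)]. -/
open MeasureTheory

/-- For `x ≥ 1` and `lam > 1`, there is `n ≥ 1` with `x ∈ [lam^(n-1), lam^n)`. -/
lemma exists_pow_Ico {lam : ℝ} (hlam : 1 < lam) {x : ℝ} (hx : 1 ≤ x) :
    ∃ n : ℕ, 1 ≤ n ∧ x ∈ Set.Ico (lam ^ (n - 1)) (lam ^ n) := by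
  have hP : ∃ n : ℕ, x < lam ^ n := pow_unbounded_of_one_lt x hlam
  classical
  let n := Nat.find hP
  have hn : x < lam ^ n := Nat.find_spec hP
  have hn1 : 1 ≤ n := by
    by_contra h
    have hz : n = 0 := by omega
    rw [hz, pow_zero] at hn
    linarith
  have hlow : lam ^ (n - 1) ≤ x := by
    have := Nat.find_min hP (m := n - 1) (by omega)
    linarith [not_lt.mp this]
  exact ⟨n, hn1, hlow, hn⟩

/-- Simple fractional Brownian motion is wide-sense semi-selfsimilar with
scale `lam` and index `H`: `E[X(lam s) X(lam t)] = lam^{2H} E[X(s) X(t)]`. -/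
theorem sfBm_wideSense_semiSelfsimilar
    {Ω : Type*} [MeasurableSpace Ω] (μ : Measure Ω) [IsProbabilityMeasure μ]
    (B X : ℝ → Ω → ℝ) (H H' lam : ℝ)
    (hH : 0 < H) (hH'0 : 0 < H') (hH'1 : H' < 1) (hlam : 1 < lam)
    (hBcov : ∀ s t : ℝ, 0 < s → 0 < t →
      ∫ ω, B s ω * B t ω ∂μ
        = (s ^ (2 * H') + t ^ (2 * H') - |t - s| ^ (2 * H')) / 2)
    (hX : ∀ n : ℕ, 1 ≤ n → ∀ t : ℝ,
      t ∈ Set.Ico (lam ^ (n - 1)) (lam ^ n) → ∀ ω : Ω,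
        X t ω = lam ^ (((n : ℝ) - 1) * (H - H')) * B t ω) :
    ∀ s t : ℝ, 1 ≤ s → 1 ≤ t →
      ∫ ω, X (lam * s) ω * X (lam * t) ω ∂μ
        = lam ^ (2 * H) * ∫ ω, X s ω * X t ω ∂μ := by
  intro s t hs ht
  have hl0 : (0 : ℝ) < lam := lt_trans one_pos hlam
  have hs0 : (0 : ℝ) < s := lt_of_lt_of_le one_pos hs
  have ht0 : (0 : ℝ) < t := lt_of_lt_of_le one_pos ht
  obtain ⟨m, hm1, hmlo, hmhi⟩ := exists_pow_Ico hlam hs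
  obtain ⟨n, hn1, hnlo, hnhi⟩ := exists_pow_Ico hlam ht
  have hmem_ls : lam * s ∈ Set.Ico (lam ^ ((m + 1) - 1)) (lam ^ (m + 1)) := by
    constructor
    · have h : lam ^ (m + 1 - 1) = lam * lam ^ (m - 1) := by
        rw [show m + 1 - 1 = (m - 1) + 1 by omega, pow_succ]; ring
      rw [h]
      exact mul_le_mul_of_nonneg_left hmlo hl0.le
    · rw [pow_succ, mul_comm (lam ^ m) lam]
      exact mul_lt_mul_of_pos_left hmhi hl0
  have hmem_lt : lam * t ∈ Set.Ico (lam ^ ((n + 1) - 1)) (lam ^ (n + 1)) := by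
    constructor
    · have h : lam ^ (n + 1 - 1) = lam * lam ^ (n - 1) := by
        rw [show n + 1 - 1 = (n - 1) + 1 by omega, pow_succ]; ring
      rw [h]
      exact mul_le_mul_of_nonneg_left hnlo hl0.le
    · rw [pow_succ, mul_comm (lam ^ n) lam]
      exact mul_lt_mul_of_pos_left hnhi hl0
  have hXs := hX m hm1 s ⟨hmlo, hmhi⟩
  have hXt := hX n hn1 t ⟨hnlo, hnhi⟩
  have hXls := hX (m + 1) (by omega) (lam * s) hmem_ls
  have hXlt := hX (n + 1) (by omega) (lam * t) hmem_lt
  have e1 : (fun ω => X (lam * s) ω * X (lam * t) ω)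
      = fun ω => (lam ^ ((((m + 1 : ℕ) : ℝ) - 1) * (H - H'))
          * lam ^ ((((n + 1 : ℕ) : ℝ) - 1) * (H - H')))
          * (B (lam * s) ω * B (lam * t) ω) :=
    funext fun ω => by rw [hXls ω, hXlt ω]; ring
  have e2 : (fun ω => X s ω * X t ω)
      = fun ω => (lam ^ (((m : ℝ) - 1) * (H - H'))
          * lam ^ (((n : ℝ) - 1) * (H - H')))
          * (B s ω * B t ω) :=
    funext fun ω => by rw [hXs ω, hXt ω]; ring
  rw [show (∫ ω, X (lam * s) ω * X (lam * t) ω ∂μ)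
      = ∫ ω, (lam ^ ((((m + 1 : ℕ) : ℝ) - 1) * (H - H'))
          * lam ^ ((((n + 1 : ℕ) : ℝ) - 1) * (H - H')))
          * (B (lam * s) ω * B (lam * t) ω) ∂μ from by rw [e1],
    show (∫ ω, X s ω * X t ω ∂μ)
      = ∫ ω, (lam ^ (((m : ℝ) - 1) * (H - H'))
          * lam ^ (((n : ℝ) - 1) * (H - H')))
          * (B s ω * B t ω) ∂μ from by rw [e2],
    integral_const_mul, integral_const_mul,
    hBcov (lam * s) (lam * t) (by positivity) (by positivity),
    hBcov s t hs0 ht0]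
  have habs : |lam * t - lam * s| = lam * |t - s| := by
    rw [show lam * t - lam * s = lam * (t - s) by ring, abs_mul, abs_of_pos hl0]
  rw [habs, Real.mul_rpow hl0.le hs0.le, Real.mul_rpow hl0.le ht0.le,
    Real.mul_rpow hl0.le (abs_nonneg _)]
  have key : lam ^ ((((m + 1 : ℕ) : ℝ) - 1) * (H - H'))
        * lam ^ ((((n + 1 : ℕ) : ℝ) - 1) * (H - H')) * lam ^ (2 * H')
      = lam ^ (2 * H)
        * (lam ^ (((m : ℝ) - 1) * (H - H')) * lam ^ (((n : ℝ) - 1) * (H - H'))) := by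
    rw [← Real.rpow_add hl0, ← Real.rpow_add hl0, ← Real.rpow_add hl0,
      ← Real.rpow_add hl0]
    congr 1
    push_cast
    ring
  linear_combination ((s ^ (2 * H') + t ^ (2 * H') - |t - s| ^ (2 * H')) / 2) * key
end

section
/- If X is semi-selfsimilar with scaling factors λ₁ > 1 and λ₂ > 1 (same index H), and log λ₁ / log λ₂ is irrational, and the one-dimensional distribution function t ↦ P(X(t) ≤ x) is continuous in t for each x, then X is self-similar with index H (the scaling relation holds for all c > 0) at the level of one-dimensional distributions. -/
/-! The scaling factors `c > 0` for which `X(ct)` and `c^H X(t)` have the same one-dimensional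
distributions form a multiplicative group. In logarithmic coordinates it contains the subgroup
generated by `log λ₁` and `log λ₂`, which is dense in `ℝ` by the irrationality of their ratio.
For a general `c`, approximate `log c` from both sides by elements of that group: continuity in
`t` controls the left-hand side, and since `a ↦ x e^{-aH}` is monotone or antitone, monotonicity
of the distribution function in `x` squeezes the right-hand side. -/

open MeasureTheory Real Set Filter

section Squeeze

variable {β : Type*} [LinearOrder β] [TopologicalSpace β] [OrderClosedTopology β]

theorem eq_of_eqOn_dense_of_monotone {f g : ℝ → β} {s : Set ℝ} (hs : Dense s)
    (hfg : EqOn f g s) {a : ℝ} (hf : ContinuousAt f a) (hg : Monotone g) : f a = g a := by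
  obtain ⟨u, -, hus, hu⟩ := hs.exists_seq_strictMono_tendsto a
  obtain ⟨v, -, hvs, hv⟩ := hs.exists_seq_strictAnti_tendsto a
  apply le_antisymm
  · refine le_of_tendsto' (hf.tendsto.comp hu) fun n => ?_
    exact (hfg (hus n).2).trans_le (hg (hus n).1.le)
  · refine ge_of_tendsto' (hf.tendsto.comp hv) fun n => ?_
    exact (hg (hvs n).1.le).trans (hfg (hvs n).2).ge

theorem eq_of_eqOn_dense_of_monotone_or_antitone {f g : ℝ → β} {s : Set ℝ} (hs : Dense s)
    (hfg : EqOn f g s) {a : ℝ} (hf : ContinuousAt f a) (hg : Monotone g ∨ Antitone g) :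
    f a = g a :=
  hg.elim (eq_of_eqOn_dense_of_monotone hs hfg hf)
    (eq_of_eqOn_dense_of_monotone (β := βᵒᵈ) hs hfg hf)

end Squeeze

theorem monotone_or_antitone_div_exp_mul (x H : ℝ) :
    Monotone (fun a => x / exp (a * H)) ∨ Antitone (fun a => x / exp (a * H)) := by
  have hφ : (fun a => x / exp (a * H)) = fun a => x * exp (a * -H) := by
    funext a
    rw [div_eq_mul_inv, ← exp_neg, neg_mul_eq_mul_neg]
  have hexp : Monotone (fun a => exp (a * -H)) ∨ Antitone (fun a => exp (a * -H)) := by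
    rcases le_total 0 (-H) with hH | hH
    · exact Or.inl fun a b hab => exp_le_exp.2 (mul_le_mul_of_nonneg_right hab hH)
    · exact Or.inr fun a b hab => exp_le_exp.2 (mul_le_mul_of_nonpos_right hab hH)
  rw [hφ]
  rcases le_total 0 x with hx | hx
  · exact hexp.imp (·.const_mul hx) (·.const_mul hx)
  · exact hexp.symm.imp (·.const_mul_of_nonpos hx) (·.const_mul_of_nonpos hx)

section ScalingLogs

variable {β : Type*}

/-- Logarithms of the scaling factors of index `H` of a family of distribution functions
`F t = P(X(t) ≤ ·)`. -/
def scalingLogs (F : ℝ → ℝ → β) (H : ℝ) : AddSubgroup ℝ where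
  carrier := {a | ∀ t, 0 < t → ∀ x, F (exp a * t) x = F t (x / exp (a * H))}
  zero_mem' := by simp
  add_mem' := by
    intro a b ha hb t ht x
    rw [exp_add, mul_assoc, ha _ (by positivity), hb t ht, div_div, ← exp_add, add_mul]
  neg_mem' := by
    intro a ha t ht x
    have h := ha (exp (-a) * t) (by positivity) (x * exp (a * H))
    rw [← mul_assoc, ← exp_add, add_neg_cancel, exp_zero, one_mul,
      mul_div_cancel_right₀ _ (exp_ne_zero _)] at h
    rw [neg_mul, exp_neg (a * H), div_inv_eq_mul, h]

variable {F : ℝ → ℝ → β} {H a : ℝ}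

theorem mem_scalingLogs :
    a ∈ scalingLogs F H ↔ ∀ t, 0 < t → ∀ x, F (exp a * t) x = F t (x / exp (a * H)) :=
  Iff.rfl

theorem scalingLogs_eq_top_of_dense [LinearOrder β] [TopologicalSpace β] [OrderClosedTopology β]
    (hmono : ∀ t, Monotone (F t)) (hcont : ∀ x, ContinuousOn (F · x) (Ioi 0))
    (hdense : Dense (scalingLogs F H : Set ℝ)) : scalingLogs F H = ⊤ := by
  refine eq_top_iff.2 fun a _ t ht x => ?_
  refine eq_of_eqOn_dense_of_monotone_or_antitone hdense (fun b hb => hb t ht x) ?_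
    ((monotone_or_antitone_div_exp_mul x H).imp (hmono t).comp (hmono t).comp_antitone)
  have hF : ContinuousAt (F · x) (exp a * t) :=
    (hcont x).continuousAt (Ioi_mem_nhds (by positivity))
  exact hF.comp (f := fun b => exp b * t) (by fun_prop)

end ScalingLogs

theorem log_mem_scalingLogs_iff {Ω : Type*} [MeasurableSpace Ω] (μ : Measure Ω)
    (X : ℝ → Ω → ℝ) (H : ℝ) {c : ℝ} (hc : 0 < c) :
    log c ∈ scalingLogs (fun t x => μ {ω | X t ω ≤ x}) H ↔
      ∀ t, 0 < t → ∀ x, μ {ω | X (c * t) ω ≤ x} = μ {ω | c ^ H * X t ω ≤ x} := by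
  have hset (t x : ℝ) : {ω | c ^ H * X t ω ≤ x} = {ω | X t ω ≤ x / exp (log c * H)} := by
    ext ω
    rw [← rpow_def_of_pos hc]
    exact (le_div_iff₀' (rpow_pos_of_pos hc H)).symm
  simp only [mem_scalingLogs, exp_log hc, hset]

theorem semiSelfsimilar_two_scales_irrational_implies_selfsimilar_general
    {Ω : Type*} [MeasurableSpace Ω] (μ : Measure Ω)
    (X : ℝ → Ω → ℝ) (H lam₁ lam₂ : ℝ)
    (hlam₁ : 1 < lam₁) (hlam₂ : 1 < lam₂)
    (hirr : Irrational (Real.log lam₁ / Real.log lam₂))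
    (hss₁ : ∀ t : ℝ, 0 < t → ∀ x : ℝ,
      μ {ω | X (lam₁ * t) ω ≤ x} = μ {ω | lam₁ ^ H * X t ω ≤ x})
    (hss₂ : ∀ t : ℝ, 0 < t → ∀ x : ℝ,
      μ {ω | X (lam₂ * t) ω ≤ x} = μ {ω | lam₂ ^ H * X t ω ≤ x})
    (hcont : ∀ x : ℝ,
      ContinuousOn (fun t : ℝ => μ {ω | X t ω ≤ x}) (Set.Ioi 0)) :
    ∀ c : ℝ, 0 < c → ∀ t : ℝ, 0 < t → ∀ x : ℝ,
      μ {ω | X (c * t) ω ≤ x} = μ {ω | c ^ H * X t ω ≤ x} := by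
  have hgen : AddSubgroup.closure {log lam₁, log lam₂} ≤
      scalingLogs (fun t x => μ {ω | X t ω ≤ x}) H := by
    rw [AddSubgroup.closure_le, pair_subset_iff]
    exact ⟨(log_mem_scalingLogs_iff μ X H (by linarith)).2 hss₁,
      (log_mem_scalingLogs_iff μ X H (by linarith)).2 hss₂⟩
  have hdense : Dense (scalingLogs (fun t x => μ {ω | X t ω ≤ x}) H : Set ℝ) :=
    (dense_addSubgroupClosure_pair_iff.2 hirr).mono hgen
  have hmono : ∀ t, Monotone fun x => μ {ω | X t ω ≤ x} :=
    fun t _ _ hxy => measure_mono fun _ hω => le_trans hω hxy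
  have htop := scalingLogs_eq_top_of_dense hmono hcont hdense
  intro c hc
  exact (log_mem_scalingLogs_iff μ X H hc).1 (htop ▸ AddSubgroup.mem_top _)

/-- If `X` is semi-selfsimilar with two scaling factors `lam₁, lam₂ > 1` whose
logarithms have irrational ratio, and its one-dimensional distribution function
is continuous in `t`, then `X` is self-similar with index `H` (for all `c > 0`),
at the level of one-dimensional distributions. -/
theorem semiSelfsimilar_two_scales_irrational_implies_selfsimilar
    {Ω : Type*} [MeasurableSpace Ω] (μ : Measure Ω) [IsProbabilityMeasure μ]
    (X : ℝ → Ω → ℝ) (H lam₁ lam₂ : ℝ) (hH : 0 < H)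
    (hlam₁ : 1 < lam₁) (hlam₂ : 1 < lam₂)
    (hirr : Irrational (Real.log lam₁ / Real.log lam₂))
    (hss₁ : ∀ t : ℝ, 0 < t → ∀ x : ℝ,
      μ {ω | X (lam₁ * t) ω ≤ x} = μ {ω | lam₁ ^ H * X t ω ≤ x})
    (hss₂ : ∀ t : ℝ, 0 < t → ∀ x : ℝ,
      μ {ω | X (lam₂ * t) ω ≤ x} = μ {ω | lam₂ ^ H * X t ω ≤ x})
    (hcont : ∀ x : ℝ,
      ContinuousOn (fun t : ℝ => μ {ω | X t ω ≤ x}) (Set.Ioi 0)) :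
    ∀ c : ℝ, 0 < c → ∀ t : ℝ, 0 < t → ∀ x : ℝ,
      μ {ω | X (c * t) ω ≤ x} = μ {ω | c ^ H * X t ω ≤ x} :=
  semiSelfsimilar_two_scales_irrational_implies_selfsimilar_general μ X H lam₁ lam₂ hlam₁ hlam₂ hirr
    hss₁ hss₂ hcont
end
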